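/- arXiv:2201.04440 — 3 statements merged into one kernel-verified Lean document; each statement's English description precedes it below -/
import Mathlib

section
/- Let E be a finite-dimensional real inner product space, S ⊆ E a nonempty closed convex set, L > 0, and f : E → ℝ a differentiable function with L-Lipschitz gradient. If μ ∈ S, 0 < α < 1/L, and v ∈ S is a projection of μ + α∇f(μ) onto S, then f(v) ≥ f(μ); that is, one projected-gradient ascent step with step size smaller than 1/L does not decrease the objective. -/
open scoped RealInnerProductSpace

/-!
The descent lemma for an `L`-smooth function gives
`f v ≥ f μ + ⟪∇f μ, v - μ⟫ - L/2 ‖v - μ‖²`, while the variational inequality characterising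
the projection `v` of `μ + α ∇f μ` gives `‖v - μ‖² ≤ α ⟪∇f μ, v - μ⟫`. Hence
`f v - f μ ≥ (1/α - L/2) ‖v - μ‖² ≥ 0` as soon as `α L < 2`.
-/

open Set in
theorem norm_image_sub_sub_fderiv_le_of_lipschitz_fderiv
    {E F : Type*} [NormedAddCommGroup E] [NormedSpace ℝ E]
    [NormedAddCommGroup F] [NormedSpace ℝ F]
    {f : E → F} (hf : Differentiable ℝ f) {L : ℝ}
    (hlip : ∀ x y, ‖fderiv ℝ f x - fderiv ℝ f y‖ ≤ L * ‖x - y‖) (x y : E) :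
    ‖f y - f x - fderiv ℝ f x (y - x)‖ ≤ L / 2 * ‖y - x‖ ^ 2 := by
  set u := y - x
  have hline : ∀ t : ℝ, HasDerivAt (fun t : ℝ => x + t • u) u t := fun t => by
    simpa using ((hasDerivAt_id t).smul_const u).const_add x
  have hg : ∀ t : ℝ, HasDerivAt (fun t : ℝ => f (x + t • u) - f x - t • fderiv ℝ f x u)
      (fderiv ℝ f (x + t • u) u - fderiv ℝ f x u) t := fun t => by
    have := (((hf _).hasFDerivAt.comp_hasDerivAt t (hline t)).sub_const (f x)).sub
      ((hasDerivAt_id t).smul_const (fderiv ℝ f x u))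
    rwa [one_smul] at this
  have hB : ∀ t : ℝ, HasDerivAt (fun t : ℝ => L / 2 * t ^ 2 * ‖u‖ ^ 2) (L * t * ‖u‖ ^ 2) t :=
    fun t => by
      refine (((hasDerivAt_pow 2 t).const_mul (L / 2)).mul_const (‖u‖ ^ 2)).congr_deriv ?_
      simp only [Nat.cast_ofNat, Nat.add_one_sub_one, pow_one]
      ring
  have bound : ∀ t ∈ Ico (0 : ℝ) 1,
      ‖fderiv ℝ f (x + t • u) u - fderiv ℝ f x u‖ ≤ L * t * ‖u‖ ^ 2 := fun t ht =>
    calc ‖fderiv ℝ f (x + t • u) u - fderiv ℝ f x u‖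
        = ‖(fderiv ℝ f (x + t • u) - fderiv ℝ f x) u‖ := rfl
      _ ≤ ‖fderiv ℝ f (x + t • u) - fderiv ℝ f x‖ * ‖u‖ := ContinuousLinearMap.le_opNorm _ _
      _ ≤ L * ‖t • u‖ * ‖u‖ := by
          gcongr
          simpa using hlip (x + t • u) x
      _ = L * t * ‖u‖ ^ 2 := by rw [norm_smul, Real.norm_of_nonneg ht.1]; ring
  have := image_norm_le_of_norm_deriv_right_le_deriv_boundary
    (fun t _ => (hg t).continuousAt.continuousWithinAt) (fun t _ => (hg t).hasDerivWithinAt)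
    (by simp) hB bound (right_mem_Icc.mpr zero_le_one)
  simpa [u] using this

theorem gradient_descent_lemma {E : Type*} [NormedAddCommGroup E] [InnerProductSpace ℝ E]
    [CompleteSpace E] {f : E → ℝ} (hf : Differentiable ℝ f) {L : ℝ}
    (hlip : ∀ x y, ‖gradient f x - gradient f y‖ ≤ L * ‖x - y‖) (x y : E) :
    f x + ⟪gradient f x, y - x⟫ - L / 2 * ‖y - x‖ ^ 2 ≤ f y := by
  have hlip' : ∀ x y, ‖fderiv ℝ f x - fderiv ℝ f y‖ ≤ L * ‖x - y‖ := fun x y => by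
    simpa [gradient, ← map_sub] using hlip x y
  have := norm_image_sub_sub_fderiv_le_of_lipschitz_fderiv hf hlip' x y
  have hinner : fderiv ℝ f x (y - x) = ⟪gradient f x, y - x⟫ := by
    simp [gradient, InnerProductSpace.toDual_symm_apply]
  rw [hinner, Real.norm_eq_abs] at this
  linarith [neg_abs_le (f y - f x - ⟪gradient f x, y - x⟫)]

theorem inner_sub_sub_nonpos_of_forall_norm_sub_le {E : Type*} [NormedAddCommGroup E]
    [InnerProductSpace ℝ E] {S : Set E} (hS : Convex ℝ S) {u v : E} (hv : v ∈ S)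
    (hmin : ∀ w ∈ S, ‖v - u‖ ≤ ‖w - u‖) {w : E} (hw : w ∈ S) :
    ⟪u - v, w - v⟫ ≤ 0 := by
  refine (norm_eq_iInf_iff_real_inner_le_zero hS hv).mp ?_ w hw
  have : Nonempty S := ⟨⟨v, hv⟩⟩
  refine le_antisymm (le_ciInf fun w => ?_) (ciInf_le ⟨0, ?_⟩ (⟨v, hv⟩ : S))
  · simpa only [norm_sub_rev u] using hmin w w.2
  · rintro _ ⟨w, rfl⟩; exact norm_nonneg _

theorem sq_norm_sub_le_mul_inner_of_forall_norm_le {E : Type*} [NormedAddCommGroup E]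
    [InnerProductSpace ℝ E] {S : Set E} (hS : Convex ℝ S) {μ v g : E} {α : ℝ}
    (hμ : μ ∈ S) (hv : v ∈ S) (hmin : ∀ w ∈ S, ‖v - (μ + α • g)‖ ≤ ‖w - (μ + α • g)‖) :
    ‖v - μ‖ ^ 2 ≤ α * ⟪g, v - μ⟫ := by
  have h := inner_sub_sub_nonpos_of_forall_norm_sub_le hS hv hmin hμ
  rw [show μ + α • g - v = (μ - v) + α • g by abel, inner_add_left, real_inner_self_eq_norm_sq,
    real_inner_smul_left, ← neg_sub v μ, inner_neg_right, norm_neg] at h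
  linarith

theorem stmt_1_general {E : Type*} [NormedAddCommGroup E] [InnerProductSpace ℝ E]
    [FiniteDimensional ℝ E]
    (S : Set E) (hS_conv : Convex ℝ S)
    (L : ℝ) (hL : 0 < L)
    (f : E → ℝ) (hf : Differentiable ℝ f)
    (hlip : ∀ x y : E, ‖gradient f x - gradient f y‖ ≤ L * ‖x - y‖)
    (μ : E) (hμ : μ ∈ S) (α : ℝ) (hα0 : 0 < α) (hα1 : α < 1 / L)
    (v : E) (hv : v ∈ S)
    (hproj : ∀ w ∈ S, ‖v - (μ + α • gradient f μ)‖ ≤ ‖w - (μ + α • gradient f μ)‖) :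
    f v ≥ f μ := by
  have hdescent := gradient_descent_lemma hf hlip μ v
  have hstep := sq_norm_sub_le_mul_inner_of_forall_norm_le hS_conv hμ hv hproj
  have hαL : α * L < 1 := (lt_div_iff₀ hL).mp hα1
  have hgain : 0 ≤ ⟪gradient f μ, v - μ⟫ - L / 2 * ‖v - μ‖ ^ 2 := by
    refine nonneg_of_mul_nonneg_right ?_ hα0
    nlinarith [sq_nonneg ‖v - μ‖]
  linarith

/-- One projected-gradient ascent step with step size `α < 1/L` on an `L`-smooth function
`f` over a nonempty closed convex set `S` does not decrease the objective. -/
theorem stmt_1 {E : Type*} [NormedAddCommGroup E] [InnerProductSpace ℝ E]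
    [FiniteDimensional ℝ E]
    (S : Set E) (hS_ne : S.Nonempty) (hS_closed : IsClosed S) (hS_conv : Convex ℝ S)
    (L : ℝ) (hL : 0 < L)
    (f : E → ℝ) (hf : Differentiable ℝ f)
    (hlip : ∀ x y : E, ‖gradient f x - gradient f y‖ ≤ L * ‖x - y‖)
    (μ : E) (hμ : μ ∈ S) (α : ℝ) (hα0 : 0 < α) (hα1 : α < 1 / L)
    (v : E) (hv : v ∈ S)
    (hproj : ∀ w ∈ S, ‖v - (μ + α • gradient f μ)‖ ≤ ‖w - (μ + α • gradient f μ)‖) :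
    f v ≥ f μ :=
  stmt_1_general S hS_conv L hL f hf hlip μ hμ α hα0 hα1 v hv hproj
end

section
/- Let E be a finite-dimensional real inner product space, S ⊆ E a nonempty compact convex set, L > 0, f : E → ℝ differentiable with L-Lipschitz gradient, and 0 < α < 1/L. Define t₀ = t₁ = 1 and tₙ₊₁ = (√(4tₙ² + 1) + 1)/2 for n ≥ 1. Let sequences (μⁿ), (yⁿ), (zⁿ), (vⁿ) in E satisfy: μ⁰ = μ¹ = z¹ ∈ S, and for every n ≥ 1: yⁿ = μⁿ + (tₙ₋₁/tₙ)(zⁿ − μⁿ) + ((tₙ₋₁ − 1)/tₙ)(μⁿ − μⁿ⁻¹); zⁿ⁺¹ is a projection of yⁿ + α∇f(yⁿ) onto S; vⁿ⁺¹ is a projection of μⁿ + α∇f(μⁿ) onto S; and μⁿ⁺¹ = zⁿ⁺¹ if f(zⁿ⁺¹) ≥ f(vⁿ⁺¹), μⁿ⁺¹ = vⁿ⁺¹ otherwise. Then the sequence (μⁿ) is bounded, and every accumulation point μ* of (μⁿ) is a critical (stationary) point of the problem of maximizing f over S, i.e. ⟨∇f(μ*), z − μ*⟩ ≤ 0 for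 all z ∈ S. -/
/-!
Comparing with the gradient-ascent step `vⁿ⁺¹` gives sufficient increase: the descent lemma
and the minimality of the projection yield `f(μⁿ) + (1/(2α) - L/2)‖vⁿ⁺¹ - μⁿ‖² ≤ f(μⁿ⁺¹)`, and
`1/(2α) - L/2 > 0` because `α < 1/L`. Since `f` is bounded on the compact set `S` containing all
iterates, the increments `vⁿ⁺¹ - μⁿ` tend to zero. Along a subsequence `μⁿ → μ*` we therefore
also have `vⁿ⁺¹ → μ*`, and closedness of the projection graph makes `μ*` the projection of
`μ* + α∇f(μ*)`, which is the variational inequality.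
-/

open scoped RealInnerProductSpace
open Filter Topology Set

section

variable {E : Type*} [NormedAddCommGroup E]

def IsProjection (S : Set E) (u p : E) : Prop :=
  p ∈ S ∧ ∀ w ∈ S, ‖p - u‖ ≤ ‖w - u‖

theorem IsProjection.of_tendsto {S : Set E} {ι : Type*} {l : Filter ι} [l.NeBot]
    (hS : IsClosed S) {u p : ι → E} {u₀ p₀ : E} (hu : Tendsto u l (𝓝 u₀))
    (hp : Tendsto p l (𝓝 p₀)) (h : ∀ᶠ i in l, IsProjection S (u i) (p i)) :
    IsProjection S u₀ p₀ :=
  ⟨hS.mem_of_tendsto hp (h.mono fun _ hi => hi.1), fun w hw =>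
    le_of_tendsto_of_tendsto (hp.sub hu).norm (tendsto_const_nhds.sub hu).norm
      (h.mono fun _ hi => hi.2 w hw)⟩

theorem tendsto_zero_of_add_mul_sq_norm_le {a : ℕ → ℝ} {d : ℕ → E} {c : ℝ} (hc : 0 < c)
    (had : ∀ n, a n + c * ‖d n‖ ^ 2 ≤ a (n + 1)) (ha : BddAbove (range a)) :
    Tendsto d atTop (𝓝 0) := by
  have hmono : Monotone a := monotone_nat_of_le_succ fun n => by
    nlinarith [had n, sq_nonneg ‖d n‖]
  have hlim := tendsto_atTop_ciSup hmono ha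
  have hincr : Tendsto (fun n => a (n + 1) - a n) atTop (𝓝 0) := by
    simpa using (hlim.comp (tendsto_add_atTop_nat 1)).sub hlim
  have hsq : Tendsto (fun n => ‖d n‖ ^ 2) atTop (𝓝 0) := by
    refine squeeze_zero (fun n => sq_nonneg _) (fun n => ?_) (by simpa using hincr.div_const c)
    rw [le_div_iff₀ hc]
    linarith [had n]
  rw [tendsto_zero_iff_norm_tendsto_zero]
  simpa using hsq.sqrt

variable [InnerProductSpace ℝ E]

namespace IsProjection

variable {S : Set E} {u p : E}

theorem sq_norm_sub_le {x g : E} {α : ℝ} (hp : IsProjection S (x + α • g) p) (hx : x ∈ S) :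
    ‖p - x‖ ^ 2 ≤ 2 * α * ⟪g, p - x⟫ := by
  have h := hp.2 x hx
  rw [show p - (x + α • g) = (p - x) - α • g by abel, show x - (x + α • g) = -(α • g) by abel,
    norm_neg] at h
  have hsq := pow_le_pow_left₀ (norm_nonneg _) h 2
  rw [norm_sub_sq_real, real_inner_smul_right, real_inner_comm] at hsq
  linarith

theorem inner_sub_le_zero (hS : Convex ℝ S) (hp : IsProjection S u p) :
    ∀ w ∈ S, ⟪u - p, w - p⟫ ≤ 0 := by
  have : Nonempty S := ⟨⟨p, hp.1⟩⟩
  refine (norm_eq_iInf_iff_real_inner_le_zero hS hp.1).mp (le_antisymm ?_ ?_)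
  · exact le_ciInf fun w => by simpa only [norm_sub_rev] using hp.2 w w.2
  · exact ciInf_le (f := fun w : S => ‖u - w‖) ⟨0, by rintro _ ⟨w, rfl⟩; exact norm_nonneg _⟩
      ⟨p, hp.1⟩

end IsProjection

theorem inner_le_zero_of_tendsto_isProjection {S : Set E} (hS_closed : IsClosed S)
    (hS_conv : Convex ℝ S) {G : E → E} (hG : Continuous G) {α : ℝ} (hα : 0 < α)
    {ι : Type*} {l : Filter ι} [l.NeBot] {x p : ι → E} {x₀ : E}
    (hx : Tendsto x l (𝓝 x₀)) (hpx : Tendsto (fun i => p i - x i) l (𝓝 0))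
    (hp : ∀ᶠ i in l, IsProjection S (x i + α • G (x i)) (p i)) :
    ∀ w ∈ S, ⟪G x₀, w - x₀⟫ ≤ 0 := by
  have hp₀ : Tendsto p l (𝓝 x₀) := by simpa using hpx.add hx
  have hfix : IsProjection S (x₀ + α • G x₀) x₀ :=
    IsProjection.of_tendsto hS_closed (hx.add ((hG.tendsto x₀).comp hx |>.const_smul α)) hp₀ hp
  intro w hw
  have h := hfix.inner_sub_le_zero hS_conv w hw
  rw [add_sub_cancel_left, real_inner_smul_left] at h
  exact nonpos_of_mul_nonpos_right h hα

variable [CompleteSpace E]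

theorem hasDerivAt_comp_add_smul {f : E → ℝ} (hf : Differentiable ℝ f) (x d : E) (s : ℝ) :
    HasDerivAt (fun s : ℝ => f (x + s • d)) ⟪gradient f (x + s • d), d⟫ s := by
  have hline : HasDerivAt (fun s : ℝ => x + s • d) d s := by
    simpa using ((hasDerivAt_id s).smul_const d).const_add x
  have := (hf (x + s • d)).hasGradientAt.hasFDerivAt.comp_hasDerivAt s hline
  rwa [InnerProductSpace.toDual_apply_apply] at this

theorem add_inner_gradient_sub_le_of_lipschitz {f : E → ℝ} {L : ℝ} (hf : Differentiable ℝ f)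
    (hlip : ∀ x y, ‖gradient f x - gradient f y‖ ≤ L * ‖x - y‖) (x w : E) :
    f x + ⟪gradient f x, w - x⟫ - L / 2 * ‖w - x‖ ^ 2 ≤ f w := by
  set d := w - x
  -- `g` is nondecreasing on `[0, ∞)`; comparing `g 0` with `g 1` is the claim.
  let g : ℝ → ℝ := fun s => f (x + s • d) - s * ⟪gradient f x, d⟫ + L / 2 * s ^ 2 * ‖d‖ ^ 2
  have hg : ∀ s, HasDerivAt g
      (⟪gradient f (x + s • d), d⟫ - ⟪gradient f x, d⟫ + L * s * ‖d‖ ^ 2) s := fun s => by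
    refine (((hasDerivAt_comp_add_smul hf x d s).sub ((hasDerivAt_id s).mul_const _)).add
      (((hasDerivAt_pow 2 s).const_mul (L / 2)).mul_const (‖d‖ ^ 2))).congr_deriv ?_
    push_cast
    ring
  have hg_nonneg : ∀ s ∈ interior (Ici (0 : ℝ)),
      0 ≤ ⟪gradient f (x + s • d), d⟫ - ⟪gradient f x, d⟫ + L * s * ‖d‖ ^ 2 := by
    intro s hs
    rw [interior_Ici, mem_Ioi] at hs
    have hgrad := hlip (x + s • d) x
    rw [add_sub_cancel_left, norm_smul, Real.norm_of_nonneg hs.le] at hgrad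
    have hinner := abs_real_inner_le_norm (gradient f (x + s • d) - gradient f x) d
    rw [inner_sub_left] at hinner
    nlinarith [abs_le.mp hinner, norm_nonneg d]
  have hmono := monotoneOn_of_hasDerivWithinAt_nonneg (convex_Ici 0)
    (fun s _ => (hg s).continuousAt.continuousWithinAt) (fun s _ => (hg s).hasDerivWithinAt)
    hg_nonneg
  have h01 := hmono self_mem_Ici (mem_Ici.mpr zero_le_one) zero_le_one
  simp only [g, zero_smul, one_smul, add_zero, d, add_sub_cancel] at h01
  linarith

theorem add_mul_sq_norm_le_of_isProjection_gradient {S : Set E} {f : E → ℝ} {L α : ℝ}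
    (hf : Differentiable ℝ f) (hlip : ∀ x y, ‖gradient f x - gradient f y‖ ≤ L * ‖x - y‖)
    (hα : 0 < α) {x p : E} (hx : x ∈ S) (hp : IsProjection S (x + α • gradient f x) p) :
    f x + (1 / (2 * α) - L / 2) * ‖p - x‖ ^ 2 ≤ f p := by
  have hascent : 1 / (2 * α) * ‖p - x‖ ^ 2 ≤ ⟪gradient f x, p - x⟫ := by
    rw [one_div_mul_eq_div, div_le_iff₀ (by positivity), mul_comm]
    exact hp.sq_norm_sub_le hx
  linarith [add_inner_gradient_sub_le_of_lipschitz hf hlip x p]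

end

theorem stmt_12_general {E : Type*} [NormedAddCommGroup E] [InnerProductSpace ℝ E]
    [FiniteDimensional ℝ E]
    (S : Set E) (hS_compact : IsCompact S) (hS_conv : Convex ℝ S)
    (L : ℝ)
    (f : E → ℝ) (hf : Differentiable ℝ f)
    (hlip : ∀ x y : E, ‖gradient f x - gradient f y‖ ≤ L * ‖x - y‖)
    (α : ℝ) (hα0 : 0 < α) (hα1 : α < 1 / L)
    (μ y z v : ℕ → E)
    (hμ0 : μ 0 = μ 1) (hμ1 : μ 1 ∈ S)
    (hz : ∀ n, 1 ≤ n → z (n + 1) ∈ S ∧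
      ∀ w ∈ S, ‖z (n + 1) - (y n + α • gradient f (y n))‖ ≤
        ‖w - (y n + α • gradient f (y n))‖)
    (hv : ∀ n, 1 ≤ n → v (n + 1) ∈ S ∧
      ∀ w ∈ S, ‖v (n + 1) - (μ n + α • gradient f (μ n))‖ ≤
        ‖w - (μ n + α • gradient f (μ n))‖)
    (hμ : ∀ n, 1 ≤ n →
      μ (n + 1) = if f (z (n + 1)) ≥ f (v (n + 1)) then z (n + 1) else v (n + 1)) :
    (∃ C : ℝ, ∀ n, ‖μ n‖ ≤ C) ∧
    ∀ μstar : E,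
      (∃ φ : ℕ → ℕ, StrictMono φ ∧
        Filter.Tendsto (fun j => μ (φ j)) Filter.atTop (nhds μstar)) →
      ∀ w ∈ S, ⟪gradient f μstar, w - μstar⟫ ≤ 0 := by
  have hμS : ∀ n, μ n ∈ S
    | 0 => hμ0 ▸ hμ1
    | 1 => hμ1
    | n + 2 => by
      rw [hμ (n + 1) (by omega)]
      split_ifs
      exacts [(hz (n + 1) (by omega)).1, (hv (n + 1) (by omega)).1]
  have hL : 0 < L := one_div_pos.mp (hα0.trans hα1)
  have hc : 0 < 1 / (2 * α) - L / 2 := by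
    rw [lt_div_iff₀ hL] at hα1
    rw [sub_pos, div_lt_div_iff₀ (by norm_num) (by positivity)]
    linarith
  have hv_le : ∀ n, 1 ≤ n → f (v (n + 1)) ≤ f (μ (n + 1)) := fun n hn => by
    rw [hμ n hn]
    split_ifs with h
    exacts [h, le_rfl]
  have hstep : ∀ n, f (μ (n + 1)) + (1 / (2 * α) - L / 2) * ‖v (n + 2) - μ (n + 1)‖ ^ 2 ≤
      f (μ (n + 2)) := fun n =>
    (add_mul_sq_norm_le_of_isProjection_gradient hf hlip hα0 (hμS _) (hv (n + 1) (by omega))).trans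
      (hv_le (n + 1) (by omega))
  have hbdd : BddAbove (range fun n => f (μ (n + 1))) :=
    (hS_compact.bddAbove_image hf.continuous.continuousOn).mono
      (range_subset_iff.mpr fun n => mem_image_of_mem f (hμS _))
  have hincr : Tendsto (fun n => v (n + 1) - μ n) atTop (𝓝 0) :=
    (tendsto_add_atTop_iff_nat 1).mp (tendsto_zero_of_add_mul_sq_norm_le hc hstep hbdd)
  have hG : Continuous (gradient f) :=
    (LipschitzWith.of_dist_le_mul (K := L.toNNReal) fun x y => by
      simpa only [dist_eq_norm, Real.coe_toNNReal _ hL.le] using hlip x y).continuous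
  refine ⟨?_, fun μstar ⟨φ, hφ, hconv⟩ => ?_⟩
  · obtain ⟨C, hC⟩ := isBounded_iff_forall_norm_le.mp hS_compact.isBounded
    exact ⟨C, fun n => hC _ (hμS n)⟩
  · exact inner_le_zero_of_tendsto_isProjection hS_compact.isClosed hS_conv hG hα0 hconv
      (hincr.comp hφ.tendsto_atTop)
      ((hφ.tendsto_atTop.eventually_ge_atTop 1).mono fun j hj => hv (φ j) hj)

/-- Convergence of the monotone APG algorithm with step size `0 < α < 1/L` over a
nonempty compact convex set `S`: the iterates `(μⁿ)` are bounded and every accumulation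
point `μ*` is a critical point of maximizing `f` over `S`, i.e.
`⟪∇f(μ*), w − μ*⟫ ≤ 0` for all `w ∈ S`. -/
theorem stmt_12 {E : Type*} [NormedAddCommGroup E] [InnerProductSpace ℝ E]
    [FiniteDimensional ℝ E]
    (S : Set E) (hS_ne : S.Nonempty) (hS_compact : IsCompact S) (hS_conv : Convex ℝ S)
    (L : ℝ) (hL : 0 < L)
    (f : E → ℝ) (hf : Differentiable ℝ f)
    (hlip : ∀ x y : E, ‖gradient f x - gradient f y‖ ≤ L * ‖x - y‖)
    (α : ℝ) (hα0 : 0 < α) (hα1 : α < 1 / L)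
    (t : ℕ → ℝ) (ht0 : t 0 = 1) (ht1 : t 1 = 1)
    (ht : ∀ n, 1 ≤ n → t (n + 1) = (Real.sqrt (4 * t n ^ 2 + 1) + 1) / 2)
    (μ y z v : ℕ → E)
    (hμ0 : μ 0 = μ 1) (hz1 : μ 1 = z 1) (hμ1 : μ 1 ∈ S)
    (hy : ∀ n, 1 ≤ n → y n = μ n + (t (n - 1) / t n) • (z n - μ n)
      + ((t (n - 1) - 1) / t n) • (μ n - μ (n - 1)))
    (hz : ∀ n, 1 ≤ n → z (n + 1) ∈ S ∧
      ∀ w ∈ S, ‖z (n + 1) - (y n + α • gradient f (y n))‖ ≤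
        ‖w - (y n + α • gradient f (y n))‖)
    (hv : ∀ n, 1 ≤ n → v (n + 1) ∈ S ∧
      ∀ w ∈ S, ‖v (n + 1) - (μ n + α • gradient f (μ n))‖ ≤
        ‖w - (μ n + α • gradient f (μ n))‖)
    (hμ : ∀ n, 1 ≤ n →
      μ (n + 1) = if f (z (n + 1)) ≥ f (v (n + 1)) then z (n + 1) else v (n + 1)) :
    (∃ C : ℝ, ∀ n, ‖μ n‖ ≤ C) ∧
    ∀ μstar : E,
      (∃ φ : ℕ → ℕ, StrictMono φ ∧
        Filter.Tendsto (fun j => μ (φ j)) Filter.atTop (nhds μstar)) →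
      ∀ w ∈ S, ⟪gradient f μstar, w - μstar⟫ ≤ 0 :=
  stmt_12_general S hS_compact hS_conv L f hf hlip α hα0 hα1 μ y z v hμ0 hμ1 hz hv hμ
end

section
/- Fix positive integers M, K, N, constants ζ_d > 0 and ϑ > 0, vectors ν̄_{ik} ∈ ℝ^M for i, k ∈ {1,…,K}, and positive coefficients β_{mi} > 0. Let f(μ) = ∑_{k=1}^K SE_k(μ) be the total spectral efficiency on ℝ^{MK}, let S = {μ ∈ ℝ^{MK} : μ ≥ 0 componentwise and ∑_{k=1}^K μ_{mk}² ≤ 1/N for each m = 1,…,M} be the feasible set, and suppose L > 0 is a Lipschitz constant of ∇f (i.e. ‖∇f(x) − ∇f(y)‖ ≤ L‖x − y‖ for all x, y). If the step size satisfies 0 < α < 1/L, then the iterates (μⁿ) generated by the monotone APG algorithm (with t₀ = t₁ = 1, tₙ₊₁ = (√(4tₙ² + 1) + 1)/2, extrapolation yⁿ = μⁿ + (tₙ₋₁/tₙ)(zⁿ − μⁿ) + ((tₙ₋₁ − 1)/tₙ)(μⁿ − μⁿ⁻¹), projected steps zⁿ⁺¹ = P_S(yⁿ + α∇f(yⁿ))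 and vⁿ⁺¹ = P_S(μⁿ + α∇f(μⁿ)), and μⁿ⁺¹ chosen as zⁿ⁺¹ if f(zⁿ⁺¹) ≥ f(vⁿ⁺¹) and vⁿ⁺¹ otherwise, starting from μ⁰ = μ¹ = z¹ ∈ S) are bounded, and every accumulation point μ* of (μⁿ) is a critical point of the total spectral efficiency maximization problem max{f(μ) : μ ∈ S}, i.e. ⟨∇f(μ*), z − μ*⟩ ≤ 0 for all z ∈ S. -/
/-!
The monotone choice gives `f(vⁿ⁺¹) ≤ f(μⁿ⁺¹)` for the projected gradient step
`vⁿ⁺¹ = P_S(μⁿ + α∇f(μⁿ))`, and for such a step with `α < 1/L` the variational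
inequality of the projection combined with the descent lemma yields the sufficient increase
`f(μⁿ) + (1/α - L)‖vⁿ⁺¹ - μⁿ‖² ≤ f(vⁿ⁺¹)`. Since `f` is bounded on the compact set `S`, the
increasing sequence `f(μⁿ)` converges, so `vⁿ⁺¹ - μⁿ → 0`. Along a subsequence `μⁿ → μ*` hence
also `vⁿ⁺¹ → μ*`, and passing to the limit in the variational inequality
`⟪μⁿ + α∇f(μⁿ) - vⁿ⁺¹, w - vⁿ⁺¹⟫ ≤ 0` gives `α⟪∇f(μ*), w - μ*⟫ ≤ 0`.
-/

open Filter Topology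
open scoped RealInnerProductSpace

section ProjectedGradient

variable {E : Type*} [NormedAddCommGroup E]

theorem tendsto_zero_of_add_mul_norm_sq_le {a : ℕ → ℝ} {e : ℕ → E} {δ : ℝ}
    (hδ : 0 < δ) (ha : BddAbove (Set.range a))
    (h : ∀ᶠ n in atTop, a n + δ * ‖e n‖ ^ 2 ≤ a (n + 1)) :
    Tendsto e atTop (𝓝 0) := by
  obtain ⟨N, hN⟩ := eventually_atTop.1 h
  have hstep (n : ℕ) : δ * ‖e (n + N)‖ ^ 2 ≤ a (n + 1 + N) - a (n + N) := by
    rw [add_right_comm]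
    linarith [hN (n + N) (Nat.le_add_left N n)]
  have hmono : Monotone fun n => a (n + N) := monotone_nat_of_le_succ fun n => by
    nlinarith [hstep n, norm_nonneg (e (n + N))]
  have hlim := tendsto_atTop_ciSup hmono (ha.mono (Set.range_comp_subset_range _ a))
  have hgap : Tendsto (fun n => (a (n + 1 + N) - a (n + N)) / δ) atTop (𝓝 0) := by
    simpa using (((tendsto_add_atTop_iff_nat 1).2 hlim).sub hlim).div_const δ
  have hsq : Tendsto (fun n => ‖e (n + N)‖ ^ 2) atTop (𝓝 0) :=
    squeeze_zero (fun _ => sq_nonneg _)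
      (fun n => (le_div_iff₀' hδ).2 (hstep n)) hgap
  rw [← tendsto_add_atTop_iff_nat N, tendsto_zero_iff_norm_tendsto_zero]
  simpa using hsq.sqrt

variable [InnerProductSpace ℝ E]

def IsProjOn (S : Set E) (u p : E) : Prop :=
  p ∈ S ∧ ∀ w ∈ S, ‖p - u‖ ≤ ‖w - u‖

theorem IsProjOn.inner_sub_nonpos {S : Set E} (hS : Convex ℝ S) {u p : E}
    (hp : IsProjOn S u p) : ∀ w ∈ S, ⟪u - p, w - p⟫ ≤ 0 := by
  have : Nonempty S := ⟨⟨p, hp.1⟩⟩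
  rw [← norm_eq_iInf_iff_real_inner_le_zero hS hp.1]
  refine le_antisymm (le_ciInf fun w => ?_) (ciInf_le ?_ (⟨p, hp.1⟩ : S))
  · simpa only [norm_sub_rev u] using hp.2 w w.2
  · exact ⟨0, Set.forall_mem_range.2 fun _ => norm_nonneg _⟩

theorem inner_sub_nonpos_of_tendsto_isProjOn {ι : Type*} {l : Filter ι} [l.NeBot]
    {S : Set E} (hS : Convex ℝ S) {u p : ι → E} {u₀ p₀ : E}
    (hu : Tendsto u l (𝓝 u₀)) (hp : Tendsto p l (𝓝 p₀))
    (h : ∀ᶠ i in l, IsProjOn S (u i) (p i)) : ∀ w ∈ S, ⟪u₀ - p₀, w - p₀⟫ ≤ 0 :=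
  fun w hw => le_of_tendsto ((hu.sub hp).inner (tendsto_const_nhds.sub hp))
    (h.mono fun _ hi => hi.inner_sub_nonpos hS w hw)

variable [CompleteSpace E]

/-- Mean value inequality for `f - ⟪∇f x, ·⟫`, whose derivative is `L‖v - x‖`-small on
`[x, v]`. -/
theorem abs_sub_sub_inner_gradient_le {f : E → ℝ} {L : ℝ} (hf : Differentiable ℝ f)
    (hlip : ∀ x y, ‖gradient f x - gradient f y‖ ≤ L * ‖x - y‖) (x v : E) :
    |f v - f x - ⟪gradient f x, v - x⟫| ≤ L * ‖v - x‖ ^ 2 := by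
  set g : E → ℝ := fun u => f u - ⟪gradient f x, u⟫
  have hg (u : E) : HasFDerivAt g
      ((InnerProductSpace.toDual ℝ E) (gradient f u - gradient f x)) u := by
    rw [map_sub]
    exact (hf u).hasGradientAt.hasFDerivAt.sub
      ((InnerProductSpace.toDual ℝ E) (gradient f x)).hasFDerivAt
  have hbound : ∀ u ∈ segment ℝ x v,
      ‖(InnerProductSpace.toDual ℝ E) (gradient f u - gradient f x)‖ ≤ L * ‖v - x‖ := by
    rintro _ ⟨s, r, hs, hr, hsr, rfl⟩
    have hdist : s • x + r • v - x = r • (v - x) := by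
      obtain rfl : s = 1 - r := by linarith
      module
    rw [LinearIsometryEquiv.norm_map]
    calc _ ≤ L * ‖s • x + r • v - x‖ := hlip _ x
      _ = r * (L * ‖v - x‖) := by
        rw [hdist, norm_smul, Real.norm_of_nonneg hr]; ring
      _ ≤ L * ‖v - x‖ := mul_le_of_le_one_left
        ((norm_nonneg _).trans (hlip v x)) (by linarith)
  have := (convex_segment x v).norm_image_sub_le_of_norm_hasFDerivWithin_le
    (fun u _ => (hg u).hasFDerivWithinAt) hbound (left_mem_segment ℝ x v)
    (right_mem_segment ℝ x v)
  calc _ = ‖g v - g x‖ := by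
        rw [Real.norm_eq_abs, inner_sub_right]; congr 1; simp only [g]; ring
    _ ≤ L * ‖v - x‖ ^ 2 := by rw [sq, ← mul_assoc]; exact this

theorem IsProjOn.add_mul_norm_sq_le {f : E → ℝ} {S : Set E} {L α : ℝ}
    (hf : Differentiable ℝ f)
    (hlip : ∀ x y, ‖gradient f x - gradient f y‖ ≤ L * ‖x - y‖)
    (hS : Convex ℝ S) (hα : 0 < α) {x p : E} (hx : x ∈ S)
    (hp : IsProjOn S (x + α • gradient f x) p) :
    f x + (α⁻¹ - L) * ‖p - x‖ ^ 2 ≤ f p := by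
  have hvi := hp.inner_sub_nonpos hS x hx
  have hexpand : ⟪x + α • gradient f x - p, x - p⟫
      = ‖p - x‖ ^ 2 - α * ⟪gradient f x, p - x⟫ := by
    rw [show x + α • gradient f x - p = (x - p) + α • gradient f x by abel,
      inner_add_left, real_inner_smul_left, real_inner_self_eq_norm_sq, norm_sub_rev,
      ← neg_sub p x, inner_neg_right]
    ring
  have hascent : α⁻¹ * ‖p - x‖ ^ 2 ≤ ⟪gradient f x, p - x⟫ := by
    rw [inv_mul_le_iff₀ hα]; linarith
  have hdescent := (abs_le.1 (abs_sub_sub_inner_gradient_le hf hlip x p)).1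
  linarith

theorem inner_gradient_sub_nonpos_of_subseq_tendsto {f : E → ℝ} {S : Set E} {L α : ℝ}
    (hf : Differentiable ℝ f)
    (hlip : ∀ x y, ‖gradient f x - gradient f y‖ ≤ L * ‖x - y‖)
    (hS : Convex ℝ S) (hfS : BddAbove (f '' S)) (hα : 0 < α) (hαL : α * L < 1)
    {μ v : ℕ → E} (hμS : ∀ n, μ n ∈ S)
    (hv : ∀ᶠ n in atTop, IsProjOn S (μ n + α • gradient f (μ n)) (v (n + 1)))
    (hmono : ∀ᶠ n in atTop, f (v (n + 1)) ≤ f (μ (n + 1)))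
    {φ : ℕ → ℕ} (hφ : StrictMono φ) {μstar : E}
    (hlim : Tendsto (fun j => μ (φ j)) atTop (𝓝 μstar)) :
    ∀ w ∈ S, ⟪gradient f μstar, w - μstar⟫ ≤ 0 := by
  have hδ : 0 < α⁻¹ - L := by
    rw [show α⁻¹ - L = α⁻¹ * (1 - α * L) by field_simp]
    exact mul_pos (inv_pos.2 hα) (sub_pos.2 hαL)
  have hstep : Tendsto (fun n => v (n + 1) - μ n) atTop (𝓝 0) := by
    refine tendsto_zero_of_add_mul_norm_sq_le hδ
      (hfS.mono (Set.range_subset_iff.2 fun n => Set.mem_image_of_mem f (hμS n))) ?_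
    filter_upwards [hv, hmono] with n hvn hmn
    linarith [hvn.add_mul_norm_sq_le hf hlip hS hα (hμS n)]
  have hgrad : Tendsto (fun j => gradient f (μ (φ j))) atTop (𝓝 (gradient f μstar)) := by
    rw [tendsto_iff_norm_sub_tendsto_zero] at hlim ⊢
    exact squeeze_zero (fun _ => norm_nonneg _) (fun j => hlip _ _)
      (by simpa using hlim.const_mul L)
  have hvφ : Tendsto (fun j => v (φ j + 1)) atTop (𝓝 μstar) := by
    simpa using hlim.add (hstep.comp hφ.tendsto_atTop)
  intro w hw
  have := inner_sub_nonpos_of_tendsto_isProjOn hS (hlim.add (hgrad.const_smul α)) hvφ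
    (hφ.tendsto_atTop.eventually hv) w hw
  rw [add_sub_cancel_left, real_inner_smul_left] at this
  exact nonpos_of_mul_nonpos_right this hα

end ProjectedGradient

section PowerControl

variable {ι κ : Type*} [Fintype κ]

def powerConstraintSet (r : ℝ) : Set (EuclideanSpace ℝ (ι × κ)) :=
  {μ | (∀ p, 0 ≤ μ p) ∧ ∀ m : ι, ∑ k : κ, (μ (m, k)) ^ 2 ≤ r}

theorem convex_powerConstraintSet (r : ℝ) :
    Convex ℝ (powerConstraintSet (ι := ι) (κ := κ) r) := by
  intro x hx y hy a b ha hb hab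
  refine ⟨fun p => ?_, fun m => ?_⟩
  · simpa using add_nonneg (mul_nonneg ha (hx.1 p)) (mul_nonneg hb (hy.1 p))
  · calc ∑ k, ((a • x + b • y) (m, k)) ^ 2
        ≤ ∑ k, (a * x (m, k) ^ 2 + b * y (m, k) ^ 2) := Finset.sum_le_sum fun k _ => by
          simpa using (even_two.convexOn_pow (𝕜 := ℝ)).2 trivial trivial ha hb hab
      _ = a * ∑ k, x (m, k) ^ 2 + b * ∑ k, y (m, k) ^ 2 := by
        rw [Finset.sum_add_distrib, Finset.mul_sum, Finset.mul_sum]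
      _ ≤ a * r + b * r := by gcongr; exacts [hx.2 m, hy.2 m]
      _ = r := by rw [← add_mul, hab, one_mul]

theorem isClosed_powerConstraintSet (r : ℝ) :
    IsClosed (powerConstraintSet (ι := ι) (κ := κ) r) := by
  simp only [powerConstraintSet, Set.ofPred_and, Set.ofPred_forall]
  exact (isClosed_iInter fun p => isClosed_le continuous_const (by fun_prop)).inter
    (isClosed_iInter fun m => isClosed_le (by fun_prop) continuous_const)

variable [Fintype ι]

theorem norm_sq_le_of_mem_powerConstraintSet {r : ℝ} {μ : EuclideanSpace ℝ (ι × κ)}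
    (hμ : μ ∈ powerConstraintSet r) : ‖μ‖ ^ 2 ≤ Fintype.card ι * r := by
  calc ‖μ‖ ^ 2 = ∑ m : ι, ∑ k : κ, μ (m, k) ^ 2 := by
        simp [EuclideanSpace.norm_sq_eq, Fintype.sum_prod_type]
    _ ≤ ∑ _m : ι, r := Finset.sum_le_sum fun m _ => hμ.2 m
    _ = Fintype.card ι * r := by simp

theorem isCompact_powerConstraintSet (r : ℝ) :
    IsCompact (powerConstraintSet (ι := ι) (κ := κ) r) :=
  Metric.isCompact_of_isClosed_isBounded (isClosed_powerConstraintSet r) <|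
    isBounded_iff_forall_norm_le.2 ⟨_, fun _ hμ => Real.le_sqrt_of_sq_le
      (norm_sq_le_of_mem_powerConstraintSet hμ)⟩

variable [DecidableEq κ]

/-- The paper's `b_k`; `interferencePlusNoise` is its `c_k`. -/
noncomputable def signalPower (ζd : ℝ) (ν : κ → κ → ι → ℝ) (k : κ)
    (μ : EuclideanSpace ℝ (ι × κ)) : ℝ :=
  ζd * (∑ m : ι, ν k k m * μ (m, k)) ^ 2

noncomputable def interferencePlusNoise (ζd N : ℝ) (ν : κ → κ → ι → ℝ) (β : ι → κ → ℝ)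
    (k : κ) (μ : EuclideanSpace ℝ (ι × κ)) : ℝ :=
  ζd * ((∑ i ∈ Finset.univ.erase k, (∑ m : ι, ν i k m * μ (m, i)) ^ 2)
    + (1 / N) * ∑ i : κ, ∑ m : ι, β m i * (μ (m, i)) ^ 2) + 1 / N ^ 2

noncomputable def totalSpectralEfficiency (ζd ϑ N : ℝ) (ν : κ → κ → ι → ℝ) (β : ι → κ → ℝ)
    (μ : EuclideanSpace ℝ (ι × κ)) : ℝ :=
  ∑ k : κ, ϑ * (Real.log (signalPower ζd ν k μ + interferencePlusNoise ζd N ν β k μ)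
    - Real.log (interferencePlusNoise ζd N ν β k μ))

theorem interferencePlusNoise_pos {ζd N : ℝ} (hζd : 0 ≤ ζd) (hN : 0 < N)
    {β : ι → κ → ℝ} (hβ : ∀ m i, 0 ≤ β m i) (ν : κ → κ → ι → ℝ) (k : κ)
    (μ : EuclideanSpace ℝ (ι × κ)) : 0 < interferencePlusNoise ζd N ν β k μ := by
  have hβμ : 0 ≤ ∑ i : κ, ∑ m : ι, β m i * (μ (m, i)) ^ 2 :=
    Finset.sum_nonneg fun i _ => Finset.sum_nonneg fun m _ =>
      mul_nonneg (hβ m i) (sq_nonneg _)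
  unfold interferencePlusNoise
  positivity

theorem differentiable_totalSpectralEfficiency {ζd N : ℝ} (hζd : 0 ≤ ζd) (hN : 0 < N)
    {β : ι → κ → ℝ} (hβ : ∀ m i, 0 ≤ β m i) (ϑ : ℝ) (ν : κ → κ → ι → ℝ) :
    Differentiable ℝ (totalSpectralEfficiency ζd ϑ N ν β) := by
  have hc := interferencePlusNoise_pos hζd hN hβ ν
  have hb (k : κ) (μ : EuclideanSpace ℝ (ι × κ)) : 0 ≤ signalPower ζd ν k μ := by
    unfold signalPower; positivity
  have hbd (k : κ) : Differentiable ℝ (signalPower ζd ν k) := by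
    unfold signalPower; fun_prop
  have hcd (k : κ) : Differentiable ℝ (interferencePlusNoise ζd N ν β k) := by
    unfold interferencePlusNoise; fun_prop
  exact Differentiable.fun_sum fun k _ =>
    ((((hbd k).add (hcd k)).log fun μ =>
      (add_pos_of_nonneg_of_pos (hb k μ) (hc k μ)).ne').sub
        ((hcd k).log fun μ => (hc k μ).ne')).const_mul ϑ

end PowerControl

theorem stmt_13_general (M K N : ℕ) (hN : 0 < N)
    (ζd : ℝ) (hζd : 0 < ζd) (ϑ : ℝ)
    (ν : Fin K → Fin K → Fin M → ℝ)
    (β : Fin M → Fin K → ℝ) (hβ : ∀ m i, 0 < β m i)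
    (L : ℝ) (hL : 0 < L) (α : ℝ) (hα0 : 0 < α) (hα1 : α < 1 / L)
    (t : ℕ → ℝ)
    (μ y z v : ℕ → EuclideanSpace ℝ (Fin M × Fin K)) :
    let b : Fin K → EuclideanSpace ℝ (Fin M × Fin K) → ℝ := fun k μ =>
      ζd * (∑ m : Fin M, ν k k m * μ (m, k)) ^ 2
    let c : Fin K → EuclideanSpace ℝ (Fin M × Fin K) → ℝ := fun k μ =>
      ζd * ((∑ i ∈ Finset.univ.erase k, (∑ m : Fin M, ν i k m * μ (m, i)) ^ 2)
        + (1 / (N : ℝ)) * ∑ i : Fin K, ∑ m : Fin M, β m i * (μ (m, i)) ^ 2)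
        + 1 / (N : ℝ) ^ 2
    let SE : Fin K → EuclideanSpace ℝ (Fin M × Fin K) → ℝ := fun k μ =>
      ϑ * (Real.log (b k μ + c k μ) - Real.log (c k μ))
    let f : EuclideanSpace ℝ (Fin M × Fin K) → ℝ := fun μ => ∑ k : Fin K, SE k μ
    let S : Set (EuclideanSpace ℝ (Fin M × Fin K)) :=
      {μ | (∀ p, 0 ≤ μ p) ∧ ∀ m : Fin M, ∑ k : Fin K, (μ (m, k)) ^ 2 ≤ 1 / (N : ℝ)}
    -- `L` is a Lipschitz constant of `∇f`
    (∀ x₁ x₂ : EuclideanSpace ℝ (Fin M × Fin K),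
      ‖gradient f x₁ - gradient f x₂‖ ≤ L * ‖x₁ - x₂‖) →
    -- initialization: μ⁰ = μ¹ = z¹ ∈ S
    μ 0 = μ 1 → μ 1 = z 1 → μ 1 ∈ S →
    -- extrapolation step
    (∀ n, 1 ≤ n → y n = μ n + (t (n - 1) / t n) • (z n - μ n)
      + ((t (n - 1) - 1) / t n) • (μ n - μ (n - 1))) →
    -- zⁿ⁺¹ = P_S(yⁿ + α ∇f(yⁿ))
    (∀ n, 1 ≤ n → z (n + 1) ∈ S ∧
      ∀ w ∈ S, ‖z (n + 1) - (y n + α • gradient f (y n))‖ ≤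
        ‖w - (y n + α • gradient f (y n))‖) →
    -- vⁿ⁺¹ = P_S(μⁿ + α ∇f(μⁿ))
    (∀ n, 1 ≤ n → v (n + 1) ∈ S ∧
      ∀ w ∈ S, ‖v (n + 1) - (μ n + α • gradient f (μ n))‖ ≤
        ‖w - (μ n + α • gradient f (μ n))‖) →
    -- monotone update
    (∀ n, 1 ≤ n →
      μ (n + 1) = if f (z (n + 1)) ≥ f (v (n + 1)) then z (n + 1) else v (n + 1)) →
    (∃ C : ℝ, ∀ n, ‖μ n‖ ≤ C) ∧
    ∀ μstar : EuclideanSpace ℝ (Fin M × Fin K),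
      (∃ φ : ℕ → ℕ, StrictMono φ ∧
        Filter.Tendsto (fun j => μ (φ j)) Filter.atTop (nhds μstar)) →
      ∀ w ∈ S, ⟪gradient f μstar, w - μstar⟫ ≤ 0 := by
  intro _ _ _ f S hLip hμ01 _ hμ1S _ hz hv hupd
  have hf : Differentiable ℝ f := differentiable_totalSpectralEfficiency hζd.le
    (Nat.cast_pos.2 hN) (fun m i => (hβ m i).le) ϑ ν
  have hS : IsCompact S := isCompact_powerConstraintSet _
  have hμS : ∀ n, μ n ∈ S := by
    rintro (_ | _ | n)
    · exact hμ01 ▸ hμ1S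
    · exact hμ1S
    · rw [hupd (n + 1) le_add_self]
      split_ifs
      exacts [(hz (n + 1) le_add_self).1, (hv (n + 1) le_add_self).1]
  refine ⟨?_, ?_⟩
  · obtain ⟨C, hC⟩ := isBounded_iff_forall_norm_le.1 hS.isBounded
    exact ⟨C, fun n => hC _ (hμS n)⟩
  · rintro μstar ⟨φ, hφ, hlim⟩
    refine inner_gradient_sub_nonpos_of_subseq_tendsto hf hLip (convex_powerConstraintSet _)
      (hS.bddAbove_image hf.continuous.continuousOn) hα0 ((lt_div_iff₀ hL).1 hα1) hμS
      (eventually_atTop.2 ⟨1, hv⟩) (eventually_atTop.2 ⟨1, fun n hn => ?_⟩) hφ hlim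
    rw [hupd n hn]
    split_ifs with h
    exacts [h, le_rfl]

/-- Convergence of the monotone APG algorithm for the total spectral efficiency
maximization problem in cell-free massive MIMO: if `L` is a Lipschitz constant of `∇f`
and `0 < α < 1/L`, the APG iterates are bounded and every accumulation point is a
critical point of `max {f(μ) : μ ∈ S}`. -/
theorem stmt_13 (M K N : ℕ) (hM : 0 < M) (hK : 0 < K) (hN : 0 < N)
    (ζd : ℝ) (hζd : 0 < ζd) (ϑ : ℝ) (hϑ : 0 < ϑ)
    (ν : Fin K → Fin K → Fin M → ℝ)
    (β : Fin M → Fin K → ℝ) (hβ : ∀ m i, 0 < β m i)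
    (L : ℝ) (hL : 0 < L) (α : ℝ) (hα0 : 0 < α) (hα1 : α < 1 / L)
    (t : ℕ → ℝ) (ht0 : t 0 = 1) (ht1 : t 1 = 1)
    (ht : ∀ n, 1 ≤ n → t (n + 1) = (Real.sqrt (4 * t n ^ 2 + 1) + 1) / 2)
    (μ y z v : ℕ → EuclideanSpace ℝ (Fin M × Fin K)) :
    let b : Fin K → EuclideanSpace ℝ (Fin M × Fin K) → ℝ := fun k μ =>
      ζd * (∑ m : Fin M, ν k k m * μ (m, k)) ^ 2
    let c : Fin K → EuclideanSpace ℝ (Fin M × Fin K) → ℝ := fun k μ =>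
      ζd * ((∑ i ∈ Finset.univ.erase k, (∑ m : Fin M, ν i k m * μ (m, i)) ^ 2)
        + (1 / (N : ℝ)) * ∑ i : Fin K, ∑ m : Fin M, β m i * (μ (m, i)) ^ 2)
        + 1 / (N : ℝ) ^ 2
    let SE : Fin K → EuclideanSpace ℝ (Fin M × Fin K) → ℝ := fun k μ =>
      ϑ * (Real.log (b k μ + c k μ) - Real.log (c k μ))
    let f : EuclideanSpace ℝ (Fin M × Fin K) → ℝ := fun μ => ∑ k : Fin K, SE k μ
    let S : Set (EuclideanSpace ℝ (Fin M × Fin K)) :=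
      {μ | (∀ p, 0 ≤ μ p) ∧ ∀ m : Fin M, ∑ k : Fin K, (μ (m, k)) ^ 2 ≤ 1 / (N : ℝ)}
    -- `L` is a Lipschitz constant of `∇f`
    (∀ x₁ x₂ : EuclideanSpace ℝ (Fin M × Fin K),
      ‖gradient f x₁ - gradient f x₂‖ ≤ L * ‖x₁ - x₂‖) →
    -- initialization: μ⁰ = μ¹ = z¹ ∈ S
    μ 0 = μ 1 → μ 1 = z 1 → μ 1 ∈ S →
    -- extrapolation step
    (∀ n, 1 ≤ n → y n = μ n + (t (n - 1) / t n) • (z n - μ n)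
      + ((t (n - 1) - 1) / t n) • (μ n - μ (n - 1))) →
    -- zⁿ⁺¹ = P_S(yⁿ + α ∇f(yⁿ))
    (∀ n, 1 ≤ n → z (n + 1) ∈ S ∧
      ∀ w ∈ S, ‖z (n + 1) - (y n + α • gradient f (y n))‖ ≤
        ‖w - (y n + α • gradient f (y n))‖) →
    -- vⁿ⁺¹ = P_S(μⁿ + α ∇f(μⁿ))
    (∀ n, 1 ≤ n → v (n + 1) ∈ S ∧
      ∀ w ∈ S, ‖v (n + 1) - (μ n + α • gradient f (μ n))‖ ≤
        ‖w - (μ n + α • gradient f (μ n))‖) →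
    -- monotone update
    (∀ n, 1 ≤ n →
      μ (n + 1) = if f (z (n + 1)) ≥ f (v (n + 1)) then z (n + 1) else v (n + 1)) →
    (∃ C : ℝ, ∀ n, ‖μ n‖ ≤ C) ∧
    ∀ μstar : EuclideanSpace ℝ (Fin M × Fin K),
      (∃ φ : ℕ → ℕ, StrictMono φ ∧
        Filter.Tendsto (fun j => μ (φ j)) Filter.atTop (nhds μstar)) →
      ∀ w ∈ S, ⟪gradient f μstar, w - μstar⟫ ≤ 0 :=
  stmt_13_general M K N hN ζd hζd ϑ ν β hβ L hL α hα0 hα1 t μ y z v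
end
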